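/- arXiv:2212.00511 — 2 statements merged into one kernel-verified Lean document; each statement's English description precedes it below -/
import Mathlib

section
/- Let σ be an automorphism of G, T₀ ≤ T, and α : T₀ → Z(G) a group homomorphism. Let D_{σ, α, T₀} := {(α(t)σ(g), g, t) | g ∈ G, t ∈ T₀} ≤ G × G × T. Suppose D_{σ, α, T₀} = E ∗ F for subgroups E ≤ G × H × T and F ≤ H × G × T. Then Δ_σ(G) = k_{1,2}(E) ∗' k_{1,2}(F), where Δ_σ(G) = {(σ(g), g) | g ∈ G} ≤ G × G, k_{1,2}(E) = {(g, h) | (g, h, 1) ∈ E}, k_{1,2}(F) = {(h, g) | (h, g, 1) ∈ F}, and for A ≤ G × H, B ≤ H × G, A ∗' B := {(g, g') | ∃ h, (g, h) ∈ A ∧ (h, g') ∈ B}. -/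
/-! Apply `k_{1,2}`, the slice at `t = 1`, to both sides of `D_{σ, α, T₀} = E ∗ F`. Slicing commutes
with the star product, and on `D_{σ, α, T₀}` the condition `t = 1` kills the twist `α(t)`, leaving
`Δ_σ(G)`. -/

/-- The twisted diagonal subgroup `D_{σ, α, T₀} = {(α(t)σ(g), g, t) | g ∈ G, t ∈ T₀}`. -/
def twistedDiag {G T : Type*} [Group G] [Group T] (σ : G ≃* G) (T₀ : Subgroup T)
    (α : T₀ →* Subgroup.center G) : Subgroup (G × G × T) where
  carrier := {x | ∃ (g : G) (t : T₀), x = (((α t : G) * σ g, g, (t : T)) : G × G × T)}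
  one_mem' := ⟨1, 1, by ext <;> simp⟩
  mul_mem' := by
    rintro x y ⟨g₁, t₁, rfl⟩ ⟨g₂, t₂, rfl⟩
    refine ⟨g₁ * g₂, t₁ * t₂, ?_⟩
    simp only [Prod.mk_mul_mk, map_mul, Subgroup.coe_mul, Prod.mk.injEq]
    exact ⟨(Commute.mul_mul_mul_comm
      (Subgroup.mem_center_iff.mp (α t₂).2 (σ g₁)) _ _), trivial⟩
  inv_mem' := by
    rintro x ⟨g, t, rfl⟩
    refine ⟨g⁻¹, t⁻¹, ?_⟩
    simp only [Prod.inv_mk, map_inv, Subgroup.coe_inv, Prod.mk.injEq]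
    refine ⟨?_, trivial⟩
    rw [mul_inv_rev]
    exact Commute.inv_inv (Subgroup.mem_center_iff.mp (α t).2 (σ g))

/-- The star product of subgroups `E ≤ G × H × T` and `F ≤ H × K × T`. -/
def star3 {G H K T : Type*} [Group G] [Group H] [Group K] [Group T]
    (E : Subgroup (G × H × T)) (F : Subgroup (H × K × T)) : Subgroup (G × K × T) where
  carrier := {x | ∃ h : H, ((x.1, h, x.2.2) : G × H × T) ∈ E ∧ ((h, x.2.1, x.2.2) : H × K × T) ∈ F}
  one_mem' := ⟨1, E.one_mem, F.one_mem⟩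
  mul_mem' := fun ⟨h₁, hD₁, hE₁⟩ ⟨h₂, hD₂, hE₂⟩ =>
    ⟨h₁ * h₂, E.mul_mem hD₁ hD₂, F.mul_mem hE₁ hE₂⟩
  inv_mem' := fun ⟨h, hD, hE⟩ => ⟨h⁻¹, E.inv_mem hD, F.inv_mem hE⟩

/-- The two-factor star product of subgroups `A ≤ G × H` and `B ≤ H × K`. -/
def star2 {G H K : Type*} [Group G] [Group H] [Group K]
    (A : Subgroup (G × H)) (B : Subgroup (H × K)) : Subgroup (G × K) where
  carrier := {x | ∃ h : H, ((x.1, h) : G × H) ∈ A ∧ ((h, x.2) : H × K) ∈ B}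
  one_mem' := ⟨1, A.one_mem, B.one_mem⟩
  mul_mem' := fun ⟨h₁, hD₁, hE₁⟩ ⟨h₂, hD₂, hE₂⟩ =>
    ⟨h₁ * h₂, A.mul_mem hD₁ hD₂, B.mul_mem hE₁ hE₂⟩
  inv_mem' := fun ⟨h, hD, hE⟩ => ⟨h⁻¹, A.inv_mem hD, B.inv_mem hE⟩

/-- `k_{1,2}(E) = {(g, h) | (g, h, 1) ∈ E}` for `E ≤ G × H × T`. -/
def k12 {G H T : Type*} [Group G] [Group H] [Group T] (E : Subgroup (G × H × T)) :
    Subgroup (G × H) where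
  carrier := {p | ((p.1, p.2, 1) : G × H × T) ∈ E}
  one_mem' := E.one_mem
  mul_mem' := fun {a b} ha hb => by simpa using E.mul_mem ha hb
  inv_mem' := fun {a} ha => by simpa using E.inv_mem ha

/-- The twisted diagonal `Δ_σ(G) = {(σ(g), g) | g ∈ G} ≤ G × G`. -/
def deltaSigma {G : Type*} [Group G] (σ : G ≃* G) : Subgroup (G × G) where
  carrier := {p | p.1 = σ p.2}
  one_mem' := by
    show (1 : G) = σ 1
    rw [map_one]
  mul_mem' := fun {a b} ha hb => by
    show a.1 * b.1 = σ (a.2 * b.2)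
    rw [map_mul, show a.1 = σ a.2 from ha, show b.1 = σ b.2 from hb]
  inv_mem' := fun {a} ha => by
    show a.1⁻¹ = σ (a.2⁻¹)
    rw [map_inv, show a.1 = σ a.2 from ha]

theorem k12_twistedDiag {G T : Type*} [Group G] [Group T] (σ : G ≃* G) (T₀ : Subgroup T)
    (α : T₀ →* Subgroup.center G) : k12 (twistedDiag σ T₀ α) = deltaSigma σ := by
  ext ⟨a, b⟩
  constructor
  · rintro ⟨g, t, hx⟩
    simp only [Prod.mk.injEq] at hx
    obtain ⟨ha, rfl, ht⟩ := hx
    obtain rfl : t = 1 := Subtype.ext ht.symm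
    show a = σ b
    simpa using ha
  · intro (ha : a = σ b)
    exact ⟨b, 1, by simp [ha]⟩

theorem k12_star3 {G H K T : Type*} [Group G] [Group H] [Group K] [Group T]
    (E : Subgroup (G × H × T)) (F : Subgroup (H × K × T)) :
    k12 (star3 E F) = star2 (k12 E) (k12 F) :=
  rfl

/-- If `D_{σ, α, T₀} = E ∗ F` with `E ≤ G × H × T` and `F ≤ H × G × T`, then
`Δ_σ(G) = k_{1,2}(E) ∗ k_{1,2}(F)`. -/
theorem deltaSigma_eq_star2_k12 {G H T : Type*} [Group G] [Group H] [Group T]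
    (σ : G ≃* G) (T₀ : Subgroup T) (α : T₀ →* Subgroup.center G)
    (E : Subgroup (G × H × T)) (F : Subgroup (H × G × T))
    (h : twistedDiag σ T₀ α = star3 E F) :
    deltaSigma σ = star2 (k12 E) (k12 F) := by
  rw [← k12_twistedDiag σ T₀ α, h, k12_star3]
end

section
/- Let C be a finite abelian group, G a finite group, D ≤ G a subgroup, and let N_G(D) act on Hom(D, C) on the right by (f, g) ↦ f ∘ c_g (i.e. (f·g)(x) = f(gxg⁻¹)). Then for every g ∈ N_G(D) and f ∈ Hom(D, C), the subgroups D_{f·g} and D_f of G × C are conjugate in G × C; in particular the transitive C-fibred G-sets (G × C)/D_{f·g} and (G × C)/D_f are isomorphic. -/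
/-!
Conjugating `(x, f(g x g⁻¹)) ∈ D_{f·g}` by `(g, 1)` gives `(g x g⁻¹, f(g x g⁻¹)) ∈ D_f`, and since
`g` normalizes `D` every element of `D_f` arises this way. If `K = a H a⁻¹`, then `b H ↦ b a⁻¹ K`
is a well-defined bijection `Q ⧸ H → Q ⧸ K` commuting with left multiplication.
-/

section
variable {G C : Type*} [Group G] [CommGroup C] [Finite G] [Finite C]

/-- The graph subgroup `D_φ = {(x, φ(x)) | x ∈ D} ≤ G × C` of a homomorphism `φ : D → C`. -/
def graphSub (D : Subgroup G) (φ : D →* C) : Subgroup (G × C) where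
  carrier := {p | ∃ x : D, p = ((x : G), φ x)}
  one_mem' := ⟨1, by ext <;> simp⟩
  mul_mem' := by
    rintro a b ⟨x, rfl⟩ ⟨y, rfl⟩
    exact ⟨x * y, by simp⟩
  inv_mem' := by
    rintro a ⟨x, rfl⟩
    exact ⟨x⁻¹, by simp⟩

/-- The right action of the normalizer on homomorphisms: `f·g = f ∘ c_g : D → C`,
`(f·g)(x) = f(g x g⁻¹)`, for `g ∈ N_G(D)`. -/
def rightDot (D : Subgroup G) (f : D →* C) (g : G) (hg : g ∈ Subgroup.normalizer (D : Set G)) : ↥D →* C where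
  toFun x := f ⟨g * (x : G) * g⁻¹, (Subgroup.mem_normalizer_iff.mp hg (x : G)).mp x.2⟩
  map_one' := by
    rw [← map_one f]
    exact congrArg f (Subtype.ext (by simp))
  map_mul' x y := by
    rw [← map_mul]
    exact congrArg f (Subtype.ext (by simp [mul_assoc]))

end

section
variable {G C : Type*} [Group G] [CommGroup C]

theorem mem_graphSub_iff (D : Subgroup G) (φ : D →* C) (p : G × C) :
    p ∈ graphSub D φ ↔ ∃ h : p.1 ∈ D, φ ⟨p.1, h⟩ = p.2 := by
  constructor
  · rintro ⟨x, rfl⟩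
    exact ⟨x.2, rfl⟩
  · rintro ⟨h, hφ⟩
    exact ⟨⟨p.1, h⟩, Prod.ext rfl hφ.symm⟩

theorem map_conj_graphSub_rightDot (D : Subgroup G) (f : D →* C) (g : G)
    (hg : g ∈ Subgroup.normalizer (D : Set G)) :
    (graphSub D (rightDot D f g hg)).map (MulAut.conj ((g, 1) : G × C)).toMonoidHom =
      graphSub D f := by
  ext ⟨x, c⟩
  rw [Subgroup.mem_map_equiv, MulAut.conj_symm_apply, mem_graphSub_iff, mem_graphSub_iff]
  have hx : g⁻¹ * x * g ∈ D ↔ x ∈ D := (Subgroup.mem_set_normalizer_iff''.mp hg x).symm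
  have hconj : g * (g⁻¹ * x * g) * g⁻¹ = x := by group
  simp only [Prod.fst_mul, Prod.snd_mul, Prod.fst_inv, Prod.snd_inv, inv_one, one_mul, mul_one,
    rightDot, MonoidHom.coe_mk, OneHom.coe_mk, hconj]
  exact ⟨fun ⟨h, hf⟩ => ⟨hx.mp h, hf⟩, fun ⟨h, hf⟩ => ⟨hx.mpr h, hf⟩⟩

end

section
variable {Q : Type*} [Group Q]

theorem mem_map_conj_iff (H : Subgroup Q) (a x : Q) :
    x ∈ H.map (MulAut.conj a).toMonoidHom ↔ a⁻¹ * x * a ∈ H := by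
  rw [Subgroup.mem_map_equiv, MulAut.conj_symm_apply]

def quotientEquivOfMapConjEq (H K : Subgroup Q) (a : Q)
    (h : H.map (MulAut.conj a).toMonoidHom = K) : Q ⧸ H ≃ Q ⧸ K where
  toFun := Quotient.map' (· * a⁻¹) fun b c hbc => by
    rw [QuotientGroup.leftRel_apply] at hbc ⊢
    rw [← h, mem_map_conj_iff]
    convert hbc using 1
    group
  invFun := Quotient.map' (· * a) fun b c hbc => by
    rw [QuotientGroup.leftRel_apply] at hbc ⊢
    rw [← h, mem_map_conj_iff] at hbc
    convert hbc using 1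
    group
  left_inv x := Quotient.inductionOn' x fun b => by simp [Quotient.map'_mk'']
  right_inv x := Quotient.inductionOn' x fun b => by simp [Quotient.map'_mk'']

theorem quotientEquivOfMapConjEq_smul (H K : Subgroup Q) (a : Q)
    (h : H.map (MulAut.conj a).toMonoidHom = K) (b : Q) (x : Q ⧸ H) :
    quotientEquivOfMapConjEq H K a h (b • x) = b • quotientEquivOfMapConjEq H K a h x :=
  Quotient.inductionOn' x fun c => congrArg QuotientGroup.mk (mul_assoc b c a⁻¹)

end

section
variable {G C : Type*} [Group G] [CommGroup C] [Finite G] [Finite C]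

/-- For `g ∈ N_G(D)` and `f : D → C`, the subgroups `D_{f·g}` and `D_f` of `G × C` are
conjugate in `G × C`; in particular the transitive `C`-fibred `G`-sets `(G × C)/D_{f·g}` and
`(G × C)/D_f` are isomorphic as `(G × C)`-sets. -/
theorem graphSub_rightDot_conj (D : Subgroup G) (f : D →* C) (g : G) (hg : g ∈ Subgroup.normalizer (D : Set G)) :
    (∃ a : G × C, (graphSub D (rightDot D f g hg)).map (MulAut.conj a).toMonoidHom =
        graphSub D f) ∧
    ∃ e : ((G × C) ⧸ graphSub D (rightDot D f g hg)) ≃ ((G × C) ⧸ graphSub D f),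
      ∀ (a : G × C) (x : (G × C) ⧸ graphSub D (rightDot D f g hg)), e (a • x) = a • e x := by
  have hconj := map_conj_graphSub_rightDot D f g hg
  exact ⟨⟨(g, 1), hconj⟩, quotientEquivOfMapConjEq _ _ _ hconj,
    quotientEquivOfMapConjEq_smul _ _ _ hconj⟩

end
end
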